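/- Let (X,d) be a metric space, ℓ, n ≥ 1, and a : Fin ℓ → Fin n → X a colored point configuration. Then for every b : Fin n → X, Σ_{t : Fin ℓ} Σ_{i : Fin ℓ} EMD(a t, a i) ≤ 2ℓ · Σ_{i : Fin ℓ} EMD(a i, b). Equivalently, if a color t is chosen uniformly at random, the expected value of Σ_{i} EMD(a t, a i) is at most 2 · Σ_{i} EMD(a i, b), i.e., at most twice the fair n-median cost of any center tuple b. -/
import Mathlib


/-- The Earth Mover's distance between two `n`-tuples of points of a metric space:
the minimum over permutations `π` of `Fin n` of `∑ t, dist (x t) (y (π t))`. -/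
noncomputable def EMD {X : Type*} [MetricSpace X] {n : ℕ} (x y : Fin n → X) : ℝ :=
  Finset.univ.inf' ⟨1, Finset.mem_univ 1⟩
    (fun π : Equiv.Perm (Fin n) => ∑ t, dist (x t) (y (π t)))

lemma EMD_le {X : Type*} [MetricSpace X] {n : ℕ} (x y : Fin n → X)
    (π : Equiv.Perm (Fin n)) : EMD x y ≤ ∑ t, dist (x t) (y (π t)) :=
  Finset.inf'_le _ (Finset.mem_univ π)

lemma EMD_exists {X : Type*} [MetricSpace X] {n : ℕ} (x y : Fin n → X) :
    ∃ π : Equiv.Perm (Fin n), EMD x y = ∑ t, dist (x t) (y (π t)) := by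
  obtain ⟨π, _, h⟩ := Finset.exists_mem_eq_inf' (s := (Finset.univ : Finset (Equiv.Perm (Fin n))))
    ⟨1, Finset.mem_univ 1⟩ (fun π => ∑ t, dist (x t) (y (π t)))
  exact ⟨π, h⟩

lemma EMD_comm {X : Type*} [MetricSpace X] {n : ℕ} (x y : Fin n → X) :
    EMD x y = EMD y x := by
  have key : ∀ (u v : Fin n → X), EMD u v ≤ EMD v u := by
    intro u v
    obtain ⟨π, hπ⟩ := EMD_exists v u
    calc EMD u v ≤ ∑ t, dist (u t) (v (π⁻¹ t)) := EMD_le u v π⁻¹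
      _ = ∑ t, dist (v t) (u (π t)) := by
          rw [← Equiv.sum_comp π (fun t => dist (u t) (v (π⁻¹ t)))]
          simp [dist_comm]
      _ = EMD v u := hπ.symm
  exact le_antisymm (key x y) (key y x)

lemma EMD_triangle {X : Type*} [MetricSpace X] {n : ℕ} (x z y : Fin n → X) :
    EMD x y ≤ EMD x z + EMD z y := by
  obtain ⟨π, hπ⟩ := EMD_exists x z
  obtain ⟨σ, hσ⟩ := EMD_exists z y
  calc EMD x y ≤ ∑ t, dist (x t) (y ((σ * π) t)) := EMD_le x y (σ * π)
    _ ≤ ∑ t, (dist (x t) (z (π t)) + dist (z (π t)) (y (σ (π t)))) := by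
        apply Finset.sum_le_sum
        intro t _
        exact dist_triangle _ _ _
    _ = (∑ t, dist (x t) (z (π t))) + ∑ t, dist (z (π t)) (y (σ (π t))) :=
        Finset.sum_add_distrib
    _ = EMD x z + EMD z y := by
        rw [hπ, hσ, Equiv.sum_comp π (fun t => dist (z t) (y (σ t)))]

/-- A uniformly random color `t` satisfies, in expectation,
`∑ i, EMD (a t) (a i) ≤ 2 · ∑ i, EMD (a i) b` for every center tuple `b`;
equivalently `∑ t, ∑ i, EMD (a t) (a i) ≤ 2ℓ · ∑ i, EMD (a i) b`. -/
theorem random_color_two_approx {X : Type*} [MetricSpace X] {ℓ n : ℕ}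
    (hℓ : 1 ≤ ℓ) (hn : 1 ≤ n) (a : Fin ℓ → Fin n → X) :
    ∀ b : Fin n → X,
      ∑ t, ∑ i, EMD (a t) (a i) ≤ 2 * (ℓ : ℝ) * ∑ i, EMD (a i) b := by
  intro b
  calc ∑ t, ∑ i, EMD (a t) (a i)
      ≤ ∑ t, ∑ i, (EMD (a t) b + EMD b (a i)) := by
        apply Finset.sum_le_sum; intro t _
        apply Finset.sum_le_sum; intro i _
        exact EMD_triangle _ _ _
    _ = ∑ t : Fin ℓ, ((ℓ : ℝ) * EMD (a t) b + ∑ i, EMD b (a i)) := by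
        apply Finset.sum_congr rfl; intro t _
        rw [Finset.sum_add_distrib, Finset.sum_const, Finset.card_univ,
          Fintype.card_fin, nsmul_eq_mul]
    _ = (ℓ : ℝ) * ∑ t, EMD (a t) b + (ℓ : ℝ) * ∑ i, EMD b (a i) := by
        rw [Finset.sum_add_distrib, Finset.mul_sum, Finset.sum_const,
          Finset.card_univ, Fintype.card_fin, nsmul_eq_mul]
    _ = 2 * (ℓ : ℝ) * ∑ i, EMD (a i) b := by
        simp only [EMD_comm b]
        ring
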